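/- Let G be a locally finite connected graph with growth function β based at a vertex g_0. Define β'(0) = β(0), β'(n) = β(n) − β(n−1) for n ≥ 1, and β''(0) = β'(0), β''(n) = β'(n) − β'(n−1) for n ≥ 1. If β'' is non-negative and non-decreasing, then G has the {f_n}-containment property with f_n = 3·β''(2n). -/

import Mathlib

/-!
Let `d ≥ 1` be such that the initial fire lies in the ball of radius `d` about `g₀`. The fire
advances by at most one sphere per step, so it needs `d` steps to reach the sphere of radius `2d`;
spending the budgets `f₁, …, f_d` on that sphere seals it off, and the fire then burns out inside
the finite ball of radius `2d - 1`. The budget suffices because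
`β'(2d) = ∑_{j ≤ 2d} β''(j) ≤ β''(0) + 2 ∑_{n=1}^{d} β''(2n) ≤ 3 ∑_{n=1}^{d} β''(2n)`,
using that `β''` is monotone and non-negative.
-/
open SimpleGraph

namespace Firefighter

variable {V : Type*}

/-- The set of vertices on fire at time `n`, starting from initial fire `X0`, with fire spreading
along paths of length at most `r` avoiding the protected sets `W 1, ..., W n`. -/
def fireSet (G : SimpleGraph V) (r : ℕ) (X0 : Set V) (W : ℕ → Set V) : ℕ → Set V
  | 0 => X0
  | n + 1 => {v | ∃ u ∈ fireSet G r X0 W n, ∃ p : G.Walk u v, p.length ≤ r ∧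
      ∀ w ∈ p.support, ∀ i, 1 ≤ i → i ≤ n + 1 → w ∉ W i}

/-- `W` is an `(f, r)`-containment strategy for the initial fire `X0` in `G`. -/
def IsContainmentStrategy (G : SimpleGraph V) (r : ℕ) (f : ℕ → ℕ)
    (X0 : Set V) (W : ℕ → Set V) : Prop :=
  (∀ n, 1 ≤ n → (W n).Finite ∧ (W n).ncard ≤ f n) ∧
  (∀ n, Disjoint (fireSet G r X0 W n) (W (n + 1))) ∧
  (∃ N, 0 < N ∧ ∀ n, N ≤ n → fireSet G r X0 W n = fireSet G r X0 W N)

/-- `G` has the `(f, r)`-containment property. -/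
def HasContainmentProperty (G : SimpleGraph V) (r : ℕ) (f : ℕ → ℕ) : Prop :=
  ∀ X0 : Set V, X0.Finite → ∃ W : ℕ → Set V, IsContainmentStrategy G r f X0 W

/-- A graph is locally finite if every vertex has finitely many neighbors. -/
def LocallyFiniteGraph (G : SimpleGraph V) : Prop := ∀ v, (G.neighborSet v).Finite

/-- The ball of radius `n` about the vertex `g0` (in the combinatorial metric). -/
def ball (G : SimpleGraph V) (g0 : V) (n : ℕ) : Set V :=
  {v | G.Reachable g0 v ∧ G.dist g0 v ≤ n}

/-- The sphere of radius `n` about the vertex `g0` (in the combinatorial metric). -/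
def sphere (G : SimpleGraph V) (g0 : V) (n : ℕ) : Set V :=
  {v | G.Reachable g0 v ∧ G.dist g0 v = n}

/-- For `T` a subset of the sphere of radius `n`, `nextAdj G g0 n T` is the set `T*` of vertices
of the sphere of radius `n+1` adjacent to at least one vertex of `T`. -/
def nextAdj (G : SimpleGraph V) (g0 : V) (n : ℕ) (T : Set V) : Set V :=
  {v ∈ sphere G g0 (n + 1) | ∃ u ∈ T, G.Adj u v}

/-- A graph has bounded degree if there is a uniform finite bound on vertex degrees. -/
def BoundedDegree (G : SimpleGraph V) : Prop :=
  ∃ D : ℕ, ∀ v, (G.neighborSet v).Finite ∧ (G.neighborSet v).ncard ≤ D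

/-- Two graphs are quasi-isometric. -/
def QuasiIsometric {V' : Type*} (G : SimpleGraph V) (H : SimpleGraph V') : Prop :=
  ∃ c : ℕ, 1 ≤ c ∧ ∃ (φ : V → V') (ψ : V' → V),
    (∀ g1 g2, H.dist (φ g1) (φ g2) ≤ c * G.dist g1 g2 + c) ∧
    (∀ h1 h2, G.dist (ψ h1) (ψ h2) ≤ c * H.dist h1 h2 + c) ∧
    (∀ g, G.dist g (ψ (φ g)) ≤ c) ∧
    (∀ h, H.dist h (φ (ψ h)) ≤ c)

/-- `f ≼ g` : there is `c > 0` with `f n ≤ c * g (c*n + c) + c` for all `n ≥ c`. -/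
def Preceq (f g : ℕ → ℕ) : Prop :=
  ∃ c : ℕ, 0 < c ∧ ∀ n, c ≤ n → f n ≤ c * g (c * n + c) + c

/-- `f` and `g` have equivalent asymptotic growth. -/
def AsympEquiv (f g : ℕ → ℕ) : Prop := Preceq f g ∧ Preceq g f

/-- The ball of radius `n` about a set `X` of vertices. -/
def ballSet (G : SimpleGraph V) (X : Set V) (n : ℕ) : Set V :=
  {v | ∃ u ∈ X, ∃ p : G.Walk u v, p.length ≤ n}

open Finset

section Sums

variable {α : Type*} [CommRing α] [LinearOrder α] [IsStrictOrderedRing α] {b : ℕ → α}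

theorem sum_range_two_mul_add_one_le (hb : Monotone b) (e : ℕ) :
    ∑ j ∈ range (2 * e + 1), b j ≤ b 0 + 2 * ∑ n ∈ Icc 1 e, b (2 * n) := by
  induction e with
  | zero => simp
  | succ e ih =>
    have hodd : b (2 * e + 1) ≤ b (2 * (e + 1)) := hb (by omega)
    rw [show 2 * (e + 1) + 1 = 2 * e + 1 + 1 + 1 by ring, sum_range_succ, sum_range_succ,
      sum_Icc_succ_top (by omega), show 2 * e + 1 + 1 = 2 * (e + 1) by ring]
    linarith

theorem sum_range_two_mul_add_one_le_three_mul (hb : Monotone b) (hb0 : 0 ≤ b 0)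
    {e : ℕ} (he : 1 ≤ e) :
    ∑ j ∈ range (2 * e + 1), b j ≤ 3 * ∑ n ∈ Icc 1 e, b (2 * n) := by
  have hb0_le : b 0 ≤ ∑ n ∈ Icc 1 e, b (2 * n) :=
    (hb (Nat.zero_le (2 * 1))).trans
      (single_le_sum (fun n _ => hb0.trans (hb (Nat.zero_le _))) (mem_Icc.2 ⟨le_rfl, he⟩))
  linarith [sum_range_two_mul_add_one_le hb e]

end Sums

theorem sum_range_succ_eq_of_sub_eq {α : Type*} [AddCommGroup α] {a b : ℕ → α}
    (h0 : b 0 = a 0) (h : ∀ n, b (n + 1) = a (n + 1) - a n) (n : ℕ) :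
    ∑ j ∈ range (n + 1), b j = a n := by
  induction n with
  | zero => simp [h0]
  | succ n ih => rw [sum_range_succ, ih, h]; abel

theorem exists_cover_of_card_le_sum {α ι : Type*} [DecidableEq α] [DecidableEq ι]
    (c : ι → ℕ) (I : Finset ι) (S : Finset α) (hS : #S ≤ ∑ i ∈ I, c i) :
    ∃ W : ι → Finset α, (∀ i, W i ⊆ S) ∧ (∀ i, #(W i) ≤ c i) ∧ S ⊆ I.biUnion W := by
  induction I using Finset.induction_on generalizing S with
  | empty =>
    obtain rfl : S = ∅ := card_eq_zero.1 (by simpa using hS)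
    exact ⟨fun _ => ∅, fun _ => empty_subset _, fun _ => by simp, empty_subset _⟩
  | insert a I ha ih =>
    obtain ⟨T, hTS, hT⟩ := exists_subset_card_eq (min_le_right (c a) #S)
    have hrest : #(S \ T) ≤ ∑ i ∈ I, c i := by
      rw [sum_insert ha] at hS
      rw [card_sdiff_of_subset hTS, hT]
      omega
    obtain ⟨W, hWS, hWc, hcov⟩ := ih (S \ T) hrest
    refine ⟨Function.update W a T, fun i => ?_, fun i => ?_, fun v hv => ?_⟩
    · rcases eq_or_ne i a with rfl | hi
      · simpa using hTS
      · simpa [hi] using (hWS i).trans sdiff_subset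
    · rcases eq_or_ne i a with rfl | hi
      · simp [hT]
      · simpa [hi] using hWc i
    · by_cases hvT : v ∈ T
      · exact mem_biUnion.2 ⟨a, mem_insert_self a I, by simpa using hvT⟩
      · obtain ⟨i, hi, hvi⟩ := mem_biUnion.1 (hcov (mem_sdiff.2 ⟨hv, hvT⟩))
        have hia : i ≠ a := fun h => ha (h ▸ hi)
        exact mem_biUnion.2 ⟨i, mem_insert_of_mem hi, by simpa [hia] using hvi⟩

theorem exists_forall_ge_eq_of_monotone_of_subset {α : Type*} {X : ℕ → Set α} {B : Set α}
    (hB : B.Finite) (hX : Monotone X) (hXB : ∀ n, X n ⊆ B) : ∃ N, ∀ n, N ≤ n → X n = X N := by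
  have : Finite B := hB.to_subtype
  obtain ⟨N, hN⟩ := WellFoundedGT.monotone_chain_condition
    (⟨fun n => ((↑) : B → α) ⁻¹' X n, fun _ _ h => Set.preimage_mono (hX h)⟩ : ℕ →o Set B)
  refine ⟨N, fun n hn => ?_⟩
  have h := Subtype.preimage_coe_eq_preimage_coe_iff.1 (hN n hn)
  rwa [Set.inter_eq_right.2 (hXB N), Set.inter_eq_right.2 (hXB n), eq_comm] at h

section Balls

variable {G : SimpleGraph V} {g0 : V}

theorem ball_mono {m n : ℕ} (h : m ≤ n) : ball G g0 m ⊆ ball G g0 n :=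
  fun _ hv => ⟨hv.1, hv.2.trans h⟩

theorem sphere_subset_ball (n : ℕ) : sphere G g0 n ⊆ ball G g0 n := fun _ hv => ⟨hv.1, hv.2.le⟩

theorem sphere_succ_eq_diff (n : ℕ) : sphere G g0 (n + 1) = ball G g0 (n + 1) \ ball G g0 n := by
  ext v
  simp only [sphere, ball, Set.mem_ofPred_eq, Set.mem_sdiff, not_and]
  grind

theorem mem_ball_succ_iff {n : ℕ} {v : V} :
    v ∈ ball G g0 (n + 1) ↔ ∃ u ∈ ball G g0 n, u = v ∨ G.Adj u v := by
  constructor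
  · rintro ⟨hreach, hdist⟩
    obtain ⟨p, hp⟩ := hreach.exists_walk_length_eq_dist
    by_cases hnil : p.Nil
    · exact ⟨v, ⟨hreach, by simp [← hp, hnil.length_eq_zero]⟩, Or.inl rfl⟩
    refine ⟨p.penultimate, ⟨⟨p.dropLast⟩, ?_⟩, Or.inr (p.adj_penultimate hnil)⟩
    have := p.length_dropLast_add_one hnil
    linarith [dist_le p.dropLast]
  · rintro ⟨u, ⟨hreach, hdist⟩, rfl | hadj⟩
    · exact ⟨hreach, by omega⟩
    · refine ⟨hreach.trans hadj.reachable, ?_⟩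
      have := hreach.dist_triangle_left v
      rw [dist_eq_one_iff_adj.2 hadj] at this
      omega

theorem ball_finite (hlf : LocallyFiniteGraph G) (g0 : V) (n : ℕ) : (ball G g0 n).Finite := by
  induction n with
  | zero =>
    refine (Set.finite_singleton g0).subset fun v ⟨hreach, hdist⟩ => ?_
    exact ((hreach.dist_eq_zero_iff.1 (Nat.le_zero.1 hdist))).symm
  | succ n ih =>
    refine (ih.biUnion fun u _ => (hlf u).insert u).subset fun v hv => ?_
    obtain ⟨u, hu, huv⟩ := mem_ball_succ_iff.1 hv
    exact Set.mem_biUnion hu (huv.imp Eq.symm id)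

theorem exists_subset_ball (hconn : G.Connected) (g0 : V) {X : Set V} (hX : X.Finite) :
    ∃ m, X ⊆ ball G g0 m := by
  obtain ⟨m, hm⟩ := (hX.image (G.dist g0)).bddAbove
  exact ⟨m, fun v hv => ⟨hconn.preconnected g0 v, hm ⟨v, hv, rfl⟩⟩⟩

theorem natCast_ncard_sphere_succ {n : ℕ} (hfin : (ball G g0 (n + 1)).Finite) :
    ((sphere G g0 (n + 1)).ncard : ℤ) = (ball G g0 (n + 1)).ncard - (ball G g0 n).ncard := by
  have := Set.ncard_sdiff_add_ncard_of_subset (ball_mono (Nat.le_add_right n 1)) hfin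
  rw [sphere_succ_eq_diff]
  omega

theorem disjoint_ball_sphere_succ (n : ℕ) : Disjoint (ball G g0 n) (sphere G g0 (n + 1)) :=
  sphere_succ_eq_diff n ▸ Set.disjoint_sdiff_right

end Balls

section Fire

variable {G : SimpleGraph V} {X0 : Set V} {W : ℕ → Set V}

theorem fireSet_subset_fireSet_succ {r n : ℕ}
    (hW : ∀ i, 1 ≤ i → i ≤ n + 1 → Disjoint (fireSet G r X0 W n) (W i)) :
    fireSet G r X0 W n ⊆ fireSet G r X0 W (n + 1) := fun v hv =>
  ⟨v, hv, .nil, Nat.zero_le r, by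
    simpa using fun i hi1 hi2 => Set.disjoint_left.1 (hW i hi1 hi2) hv⟩

theorem isContainmentStrategy_of_subset_finite {r : ℕ} {f : ℕ → ℕ} {B : Set V} (hB : B.Finite)
    (hW : ∀ n, 1 ≤ n → (W n).Finite ∧ (W n).ncard ≤ f n)
    (hfire : ∀ n, fireSet G r X0 W n ⊆ B) (hdisj : ∀ i, Disjoint B (W i)) :
    IsContainmentStrategy G r f X0 W := by
  have hmono : Monotone (fireSet G r X0 W) := monotone_nat_of_le_succ fun n =>
    fireSet_subset_fireSet_succ fun i _ _ => (hdisj i).mono_left (hfire n)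
  obtain ⟨N, hN⟩ := exists_forall_ge_eq_of_monotone_of_subset hB hmono hfire
  refine ⟨hW, fun n => (hdisj (n + 1)).mono_left (hfire n), N + 1, N.succ_pos, fun n hn => ?_⟩
  rw [hN n (by omega), hN (N + 1) (by omega)]

theorem exists_of_mem_fireSet_one_succ {n : ℕ} {v : V} (hv : v ∈ fireSet G 1 X0 W (n + 1)) :
    ∃ u ∈ fireSet G 1 X0 W n, (u = v ∨ G.Adj u v) ∧ ∀ i, 1 ≤ i → i ≤ n + 1 → v ∉ W i := by
  obtain ⟨u, hu, p, hp, hW⟩ := hv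
  have hedist : G.edist u v ≤ 1 := (edist_le p).trans (by exact_mod_cast hp)
  exact ⟨u, hu, (edist_le_one_iff_adj_or_eq.1 hedist).symm, hW v p.end_mem_support⟩

theorem fireSet_one_subset_ball {g0 : V} {m k : ℕ} (hX0 : X0 ⊆ ball G g0 m)
    (hbarrier : ∀ v ∈ sphere G g0 (m + k + 1), ∃ i, 1 ≤ i ∧ i ≤ k + 1 ∧ v ∈ W i) (n : ℕ) :
    fireSet G 1 X0 W n ⊆ ball G g0 (m + min n k) := by
  induction n with
  | zero => simpa [fireSet] using hX0
  | succ n ih =>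
    intro v hv
    obtain ⟨u, hu, huv, hvW⟩ := exists_of_mem_fireSet_one_succ hv
    have hv' : v ∈ ball G g0 (m + min n k + 1) := mem_ball_succ_iff.2 ⟨u, ih hu, huv⟩
    rcases lt_or_ge n k with h | h
    · rwa [show m + min (n + 1) k = m + min n k + 1 by omega]
    · rw [min_eq_right h] at hv'
      rw [min_eq_right (by omega)]
      by_contra hvk
      obtain ⟨i, hi1, hik, hvi⟩ := hbarrier v (sphere_succ_eq_diff _ ▸ ⟨hv', hvk⟩)
      exact hvW i hi1 (by omega) hvi

end Fire

theorem stmt14_general {V : Type*} (G : SimpleGraph V) (hconn : G.Connected)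
    (hlf : LocallyFiniteGraph G) (g0 : V) (betaP betaPP : ℕ → ℤ)
    (hbetaP : ∀ n : ℕ, betaP (n + 1) =
      ((ball G g0 (n + 1)).ncard : ℤ) - ((ball G g0 n).ncard : ℤ))
    (hbetaPP0 : betaPP 0 = betaP 0)
    (hbetaPP : ∀ n : ℕ, betaPP (n + 1) = betaP (n + 1) - betaP n)
    (hnonneg : ∀ n, 0 ≤ betaPP n) (hmono : Monotone betaPP) :
    HasContainmentProperty G 1 (fun n => (3 * betaPP (2 * n)).toNat) := by
  classical
  intro X0 hX0
  obtain ⟨m, hX0m⟩ := exists_subset_ball hconn g0 hX0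
  -- With `d = m + 1`, the fire starts in the ball of radius `d` and the sphere of radius
  -- `2d = d + m + 1` is protected during the first `d` steps.
  have hsphere : (sphere G g0 (m + 1 + m + 1)).Finite :=
    (ball_finite hlf g0 _).subset (sphere_subset_ball _)
  have hcard : #hsphere.toFinset ≤ ∑ n ∈ Icc 1 (m + 1), (3 * betaPP (2 * n)).toNat := by
    zify
    rw [← Set.ncard_eq_toFinset_card _ hsphere, natCast_ncard_sphere_succ (ball_finite hlf g0 _),
      ← hbetaP, show m + 1 + m + 1 = 2 * (m + 1) by ring,
      ← sum_range_succ_eq_of_sub_eq hbetaPP0 hbetaPP,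
      sum_congr rfl fun n _ => Int.toNat_of_nonneg (by linarith [hnonneg (2 * n)]), ← mul_sum]
    exact sum_range_two_mul_add_one_le_three_mul hmono (hnonneg 0) (Nat.le_add_left 1 m)
  obtain ⟨W, hWS, hWc, hcov⟩ := exists_cover_of_card_le_sum _ _ _ hcard
  refine ⟨fun n => W n, isContainmentStrategy_of_subset_finite (ball_finite hlf g0 (m + 1 + m))
    (fun n _ => ⟨(W n).finite_toSet, by simpa using hWc n⟩) (fun n => ?_) (fun i => ?_)⟩
  · refine (fireSet_one_subset_ball (k := m)
      (hX0m.trans (ball_mono (Nat.le_add_right m 1))) (fun v hv => ?_) n).trans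
      (ball_mono (Nat.add_le_add_left (min_le_right n m) _))
    obtain ⟨i, hi, hvi⟩ := mem_biUnion.1 (hcov (hsphere.mem_toFinset.2 hv))
    exact ⟨i, (mem_Icc.1 hi).1, (mem_Icc.1 hi).2, hvi⟩
  · exact (disjoint_ball_sphere_succ _).mono_right fun v hv => hsphere.mem_toFinset.1 (hWS i hv)

/-- if the second difference `β''` of the growth function of a locally finite
connected graph is non-negative and non-decreasing, then `G` has the `{f_n}`-containment property
with `f_n = 3·β''(2n)`. -/
theorem stmt14 {V : Type*} (G : SimpleGraph V) (hconn : G.Connected)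
    (hlf : LocallyFiniteGraph G) (g0 : V) (betaP betaPP : ℕ → ℤ)
    (hbetaP0 : betaP 0 = ((ball G g0 0).ncard : ℤ))
    (hbetaP : ∀ n : ℕ, betaP (n + 1) =
      ((ball G g0 (n + 1)).ncard : ℤ) - ((ball G g0 n).ncard : ℤ))
    (hbetaPP0 : betaPP 0 = betaP 0)
    (hbetaPP : ∀ n : ℕ, betaPP (n + 1) = betaP (n + 1) - betaP n)
    (hnonneg : ∀ n, 0 ≤ betaPP n) (hmono : Monotone betaPP) :
    HasContainmentProperty G 1 (fun n => (3 * betaPP (2 * n)).toNat) :=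
  stmt14_general G hconn hlf g0 betaP betaPP hbetaP hbetaPP0 hbetaPP hnonneg hmono

end Firefighter
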